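/- arXiv:math/0504508 — 2 statements merged into one kernel-verified Lean document; each statement's English description precedes it below -/
import Mathlib

section
/- Let z be a standard normal random variable, θ ≥ 0 a real number, and y = θ + z. Then for any c ≥ 0, the function θ ↦ E[y² · 1{|y| > c}] is nondecreasing in θ on [0, ∞). -/
/-!
Write `E[g(θ + z)] = ∫ g(y) k(y - θ) dy` with `g(y) = y² 1{|y| > c}` nondecreasing in `|y|` and
the Gaussian kernel `k` nonincreasing in `|x|`. For `|θ₁| ≤ θ₂`, the reflection `y ↦ θ₁ + θ₂ - y`
exchanges `k(· - θ₁)` and `k(· - θ₂)`, so twice the difference of the two integrals is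
`∫ (g(y) - g(θ₁ + θ₂ - y)) (k(y - θ₂) - k(y - θ₁)) dy`, whose integrand is pointwise nonnegative:
both factors have the sign of `2y - (θ₁ + θ₂)`.
-/

open MeasureTheory Real

theorem integrable_pow_mul_exp_neg_mul_sq {b : ℝ} (hb : 0 < b) (n : ℕ) :
    Integrable fun x : ℝ => x ^ n * exp (-b * x ^ 2) := by
  simpa using integrable_rpow_mul_exp_neg_mul_sq hb (s := n) (by linarith [n.cast_nonneg (α := ℝ)])

theorem integrable_pow_mul_exp_neg_mul_sq_sub {b : ℝ} (hb : 0 < b) (n : ℕ) (θ : ℝ) :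
    Integrable fun y : ℝ => y ^ n * exp (-b * (y - θ) ^ 2) := by
  have hshift : Integrable fun t : ℝ => (t + θ) ^ n * exp (-b * t ^ 2) := by
    simp_rw [add_pow, Finset.sum_mul]
    refine integrable_finsetSum _ fun m _ => ?_
    refine ((integrable_pow_mul_exp_neg_mul_sq hb m).const_mul (θ ^ (n - m) * n.choose m)).congr
      (ae_of_all _ fun t => ?_)
    ring
  simpa using hshift.comp_sub_right θ

theorem integral_mul_comp_sub_le_of_abs_le {f k : ℝ → ℝ}
    (hf : ∀ x y, |x| ≤ |y| → f x ≤ f y) (hk : ∀ x y, |x| ≤ |y| → k y ≤ k x)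
    {θ₁ θ₂ : ℝ} (hθ : |θ₁| ≤ θ₂)
    (hi₁ : Integrable fun y => f y * k (y - θ₁)) (hi₂ : Integrable fun y => f y * k (y - θ₂)) :
    ∫ y, f y * k (y - θ₁) ≤ ∫ y, f y * k (y - θ₂) := by
  have hk_neg : ∀ x, k (-x) = k x := fun x =>
    le_antisymm (hk _ _ (abs_neg x).ge) (hk _ _ (abs_neg x).le)
  obtain ⟨hs, h12⟩ : 0 ≤ θ₁ + θ₂ ∧ θ₁ ≤ θ₂ := by
    constructor <;> linarith [neg_abs_le θ₁, le_abs_self θ₁]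
  set s := θ₁ + θ₂
  set h : ℝ → ℝ := fun y => f y * (k (y - θ₂) - k (y - θ₁))
  have hi : Integrable h := by
    convert hi₂.sub hi₁ using 1
    ext y
    simp only [h, Pi.sub_apply, mul_sub]
  have h_refl : ∀ y, h y + h (s - y) = (f y - f (s - y)) * (k (y - θ₂) - k (y - θ₁)) := by
    intro y
    have e₁ : s - y - θ₂ = -(y - θ₁) := by ring
    have e₂ : s - y - θ₁ = -(y - θ₂) := by ring
    simp only [h, e₁, e₂, hk_neg]
    ring
  have h_nonneg : ∀ y, 0 ≤ h y + h (s - y) := by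
    intro y
    rw [h_refl]
    rcases le_total s (2 * y) with hy | hy
    · refine mul_nonneg (sub_nonneg.2 (hf _ _ ?_)) (sub_nonneg.2 (hk _ _ ?_)) <;>
        rw [abs_le] <;> constructor <;>
        linarith [le_abs_self y, le_abs_self (y - θ₁), neg_abs_le (y - θ₁)]
    · refine mul_nonneg_of_nonpos_of_nonpos (sub_nonpos.2 (hf _ _ ?_)) (sub_nonpos.2 (hk _ _ ?_)) <;>
        rw [abs_le] <;> constructor <;>
        linarith [le_abs_self (s - y), neg_abs_le (s - y), le_abs_self (y - θ₂), neg_abs_le (y - θ₂)]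
  have h_int : 0 ≤ 2 * ∫ y, h y :=
    calc 0 ≤ ∫ y, (h y + h (s - y)) := integral_nonneg h_nonneg
      _ = 2 * ∫ y, h y := by
        rw [integral_add hi (hi.comp_sub_left s), integral_sub_left_eq_self h volume s]; ring
  rw [← sub_nonneg, ← integral_sub hi₂ hi₁]
  simpa only [h, mul_sub, Nat.ofNat_pos, mul_nonneg_iff_of_pos_left] using h_int

theorem stmt0_general (c : ℝ) (θ₁ θ₂ : ℝ) (h1 : 0 ≤ θ₁) (h12 : θ₁ ≤ θ₂) :
    (1 / Real.sqrt (2 * Real.pi)) *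
        ∫ y in {y : ℝ | c < |y|}, y ^ 2 * Real.exp (-(y - θ₁) ^ 2 / 2) ≤
      (1 / Real.sqrt (2 * Real.pi)) *
        ∫ y in {y : ℝ | c < |y|}, y ^ 2 * Real.exp (-(y - θ₂) ^ 2 / 2) := by
  set S := {y : ℝ | c < |y|}
  have hS : MeasurableSet S := measurableSet_lt measurable_const continuous_abs.measurable
  have h_ind : ∀ θ, ∫ y in S, y ^ 2 * exp (-(y - θ) ^ 2 / 2)
      = ∫ y, S.indicator (· ^ 2) y * exp (-(y - θ) ^ 2 / 2) := fun θ => by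
    simp only [← integral_indicator hS, Set.indicator_mul_left]
  have h_int : ∀ θ, Integrable fun y => S.indicator (· ^ 2) y * exp (-(y - θ) ^ 2 / 2) :=
    fun θ => by
      refine ((integrable_pow_mul_exp_neg_mul_sq_sub (b := 1 / 2) (by norm_num) 2 θ).indicator
        hS).congr (ae_of_all _ fun y => ?_)
      simp only [Set.indicator_apply]
      split_ifs <;> ring_nf
  refine mul_le_mul_of_nonneg_left ?_ (by positivity)
  rw [h_ind, h_ind]
  refine integral_mul_comp_sub_le_of_abs_le (k := fun x => exp (-x ^ 2 / 2)) ?_ ?_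
    ((abs_of_nonneg h1).trans_le h12) (h_int θ₁) (h_int θ₂)
  · intro x y hxy
    have hsq : x ^ 2 ≤ y ^ 2 := sq_le_sq.2 hxy
    simp only [Set.indicator_apply, S, Set.mem_ofPred_eq]
    split_ifs <;> first | positivity | linarith
  · intro x y hxy
    have hsq : x ^ 2 ≤ y ^ 2 := sq_le_sq.2 hxy
    simp only [exp_le_exp]
    linarith

/-- For `y = θ + z` with `z ~ N(0,1)`, the map
`θ ↦ E[y² · 1{|y| > c}] = (1/√(2π)) ∫_{|y|>c} y² exp(-(y-θ)²/2) dy`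
is nondecreasing in `θ` on `[0, ∞)`, for every `c ≥ 0`. -/
theorem stmt0 (c : ℝ) (hc : 0 ≤ c) (θ₁ θ₂ : ℝ) (h1 : 0 ≤ θ₁) (h12 : θ₁ ≤ θ₂) :
    (1 / Real.sqrt (2 * Real.pi)) *
        ∫ y in {y : ℝ | c < |y|}, y ^ 2 * Real.exp (-(y - θ₁) ^ 2 / 2) ≤
      (1 / Real.sqrt (2 * Real.pi)) *
        ∫ y in {y : ℝ | c < |y|}, y ^ 2 * Real.exp (-(y - θ₂) ^ 2 / 2) :=
  stmt0_general c θ₁ θ₂ h1 h12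
end

section
/- Let y = θ + σz with z ~ N(0,1), σ > 0, and define the soft-threshold estimator δ = sgn(y)(|y| - σt)₊ for threshold level t = √(2 log B) with B > 1. Then E[(δ - θ)²] ≤ min{2θ², σ²(1 + 2 log B)} + σ²/B. -/
/-!
Write `y = θ + σz` and `c = σt`. Soft thresholding is `y` minus its projection `clip c y`
onto `[-c, c]`, so the error is `σz - clip c (θ + σz)`.

For the bound `σ²(1 + t²)`, expand the square: `E[z · clip c (θ + σz)] ≥ 0` because the
clipped function is monotone and `z` is symmetric, and `|clip| ≤ c`.

For the bound `2θ² + σ²/B`, the error is pointwise at most `θ² + σ²((|z| - t)₊)²`, and the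
Gaussian tail moment satisfies
`E((|z| - t)₊)² = 2 E((z - t)₊)² ≤ 2 e^{-t²/2} E(z₊)² = e^{-t²/2} = 1/B`,
from the density comparison `φ(u + t) ≤ e^{-t²/2} φ(u)` for `u, t ≥ 0`.
-/

open MeasureTheory ProbabilityTheory Real

section Symmetric

variable {μ : Measure ℝ} (hμ : μ.map (fun x => -x) = μ)
include hμ

lemma integral_comp_neg_of_map_neg (g : ℝ → ℝ) : ∫ z, g (-z) ∂μ = ∫ z, g z ∂μ := by
  conv_rhs => rw [← hμ]
  exact (integral_map_equiv (MeasurableEquiv.neg ℝ) g).symm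

lemma integrable_comp_neg_of_map_neg {g : ℝ → ℝ} (hg : Integrable g μ) :
    Integrable (fun z => g (-z)) μ := by
  rw [← hμ] at hg
  exact (integrable_map_equiv (MeasurableEquiv.neg ℝ) g).mp hg

lemma integral_mul_nonneg_of_monotone {f : ℝ → ℝ} (hf : Monotone f)
    (hint : Integrable (fun z => z * f z) μ) : 0 ≤ ∫ z, z * f z ∂μ := by
  have hflip : ∫ z, -z * f (-z) ∂μ = ∫ z, z * f z ∂μ :=
    integral_comp_neg_of_map_neg hμ fun z => z * f z
  have hsum : 0 ≤ ∫ z, (z * f z + -z * f (-z)) ∂μ := by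
    refine integral_nonneg fun z => ?_
    simp only [Pi.zero_apply]
    rcases le_total 0 z with hz | hz
    · nlinarith [hf (show -z ≤ z by linarith)]
    · nlinarith [hf (show z ≤ -z by linarith)]
  rw [integral_add hint (integrable_comp_neg_of_map_neg hμ hint), hflip] at hsum
  linarith

end Symmetric

lemma gaussianReal_zero_map_neg (v : NNReal) :
    (gaussianReal 0 v).map (fun x => -x) = gaussianReal 0 v := by
  simpa using gaussianReal_map_neg (μ := 0) (v := v)

lemma integrable_sq_gaussianReal (μ : ℝ) (v : NNReal) :
    Integrable (fun z => z ^ 2) (gaussianReal μ v) :=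
  (memLp_id_gaussianReal 2).integrable_sq

lemma integral_sq_gaussianReal (v : NNReal) : ∫ z, z ^ 2 ∂gaussianReal 0 v = v := by
  simpa [variance_eq_integral measurable_id.aemeasurable] using
    variance_id_gaussianReal (μ := 0) (v := v)

lemma integrable_gaussianReal_of_abs_le_sq {μ : ℝ} {v : NNReal} {f : ℝ → ℝ}
    (hf : AEStronglyMeasurable f (gaussianReal μ v)) (hle : ∀ z, |f z| ≤ z ^ 2) :
    Integrable f (gaussianReal μ v) :=
  (integrable_sq_gaussianReal μ v).mono' hf (ae_of_all _ hle)

lemma gaussianPDFReal_add_le {t u : ℝ} (ht : 0 ≤ t) (hu : 0 ≤ u) :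
    gaussianPDFReal 0 1 (u + t) ≤ exp (-t ^ 2 / 2) * gaussianPDFReal 0 1 u := by
  have hexp : exp (-(u + t) ^ 2 / 2) ≤ exp (-t ^ 2 / 2) * exp (-u ^ 2 / 2) := by
    rw [← exp_add, exp_le_exp]
    nlinarith [mul_nonneg ht hu]
  simp only [gaussianPDFReal_def, NNReal.coe_one, mul_one, sub_zero]
  rw [mul_left_comm]
  exact mul_le_mul_of_nonneg_left hexp (by positivity)

lemma integral_comp_sub_le_of_nonneg {g : ℝ → ℝ} (hg0 : ∀ u, 0 ≤ g u)
    (hg_neg : ∀ u < 0, g u = 0)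
    (hg : Integrable g (gaussianReal 0 1)) {t : ℝ} (ht : 0 ≤ t) :
    ∫ z, g (z - t) ∂gaussianReal 0 1 ≤ exp (-t ^ 2 / 2) * ∫ z, g z ∂gaussianReal 0 1 := by
  simp only [integral_gaussianReal_eq_integral_smul one_ne_zero, smul_eq_mul]
  have hshift : ∫ z, gaussianPDFReal 0 1 z * g (z - t)
      = ∫ u, gaussianPDFReal 0 1 (u + t) * g u := by
    simpa only [sub_add_cancel] using
      integral_sub_right_eq_self (fun u => gaussianPDFReal 0 1 (u + t) * g u) t
  have hdens : Integrable (fun u => gaussianPDFReal 0 1 u * g u) := by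
    rw [gaussianReal_of_var_ne_zero _ one_ne_zero, integrable_withDensity_iff_integrable_smul'
      (measurable_gaussianPDF 0 1) (ae_of_all _ fun _ => gaussianPDF_lt_top)] at hg
    simpa only [toReal_gaussianPDF, smul_eq_mul] using hg
  rw [hshift, ← integral_const_mul]
  refine integral_mono_of_nonneg (ae_of_all _ fun u => ?_) (hdens.const_mul _)
    (ae_of_all _ fun u => ?_)
  · exact mul_nonneg (gaussianPDFReal_nonneg _ _ _) (hg0 u)
  · rcases lt_or_ge u 0 with hu | hu
    · simp [hg_neg u hu]
    · simp only [← mul_assoc]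
      exact mul_le_mul_of_nonneg_right (gaussianPDFReal_add_le ht hu) (hg0 u)

lemma sq_max_abs_sub_eq {t : ℝ} (ht : 0 ≤ t) (z : ℝ) :
    max (|z| - t) 0 ^ 2 = max (z - t) 0 ^ 2 + max (-z - t) 0 ^ 2 := by
  rcases le_total 0 z with hz | hz
  · rw [abs_of_nonneg hz, max_eq_right (by linarith : -z - t ≤ 0)]
    ring
  · rw [abs_of_nonpos hz, max_eq_right (by linarith : z - t ≤ 0)]
    ring

lemma sq_max_sub_le_sq {t : ℝ} (ht : 0 ≤ t) (a : ℝ) : max (a - t) 0 ^ 2 ≤ a ^ 2 := by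
  rcases le_total a t with ha | ha
  · rw [max_eq_right (by linarith)]
    nlinarith
  · rw [max_eq_left (by linarith)]
    nlinarith

lemma integrable_sq_max_sub_gaussianReal (μ : ℝ) (v : NNReal) {t : ℝ} (ht : 0 ≤ t) :
    Integrable (fun z => max (z - t) 0 ^ 2) (gaussianReal μ v) :=
  integrable_gaussianReal_of_abs_le_sq (by fun_prop) fun z => by
    simpa only [abs_sq] using sq_max_sub_le_sq ht z

lemma integral_sq_max_abs_sub_eq (v : NNReal) {t : ℝ} (ht : 0 ≤ t) :
    ∫ z, max (|z| - t) 0 ^ 2 ∂gaussianReal 0 v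
      = 2 * ∫ z, max (z - t) 0 ^ 2 ∂gaussianReal 0 v := by
  have hsymm := gaussianReal_zero_map_neg v
  have hint := integrable_sq_max_sub_gaussianReal 0 v ht
  have hflip : ∫ z, max (-z - t) 0 ^ 2 ∂gaussianReal 0 v
      = ∫ z, max (z - t) 0 ^ 2 ∂gaussianReal 0 v :=
    integral_comp_neg_of_map_neg hsymm fun z => max (z - t) 0 ^ 2
  simp_rw [sq_max_abs_sub_eq ht]
  rw [integral_add hint (integrable_comp_neg_of_map_neg hsymm hint), hflip]
  ring

lemma integral_sq_max_abs_sub_le {t : ℝ} (ht : 0 ≤ t) :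
    ∫ z, max (|z| - t) 0 ^ 2 ∂gaussianReal 0 1 ≤ exp (-t ^ 2 / 2) := by
  have hhalf : 2 * ∫ z, max (z - 0) 0 ^ 2 ∂gaussianReal 0 1 = 1 := by
    rw [← integral_sq_max_abs_sub_eq 1 le_rfl]
    simpa [sq_abs] using integral_sq_gaussianReal 1
  have hshift := integral_comp_sub_le_of_nonneg (g := fun u => max u 0 ^ 2) (fun u => sq_nonneg _)
    (fun u hu => by simp [max_eq_right hu.le])
    (by simpa using integrable_sq_max_sub_gaussianReal 0 1 le_rfl) ht
  simp only [sub_zero] at hhalf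
  rw [integral_sq_max_abs_sub_eq 1 ht]
  nlinarith [exp_pos (-t ^ 2 / 2)]

def clip (c y : ℝ) : ℝ := max (min y c) (-c)

lemma clip_monotone (c : ℝ) : Monotone (clip c) :=
  fun _ _ h => max_le_max (min_le_min h le_rfl) le_rfl

lemma abs_clip_le {c : ℝ} (hc : 0 ≤ c) (y : ℝ) : |clip c y| ≤ c :=
  abs_le.mpr ⟨le_max_right _ _, max_le (min_le_right _ _) (by linarith)⟩

lemma sign_mul_max_abs_sub_eq_sub_clip {c : ℝ} (hc : 0 ≤ c) (y : ℝ) :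
    Real.sign y * max (|y| - c) 0 = y - clip c y := by
  unfold clip
  rcases lt_trichotomy y 0 with hy | rfl | hy
  · rw [Real.sign_of_neg hy, abs_of_neg hy]
    rcases le_total (-c) y with h | h
    · rw [max_eq_right (by linarith), min_eq_left (by linarith), max_eq_left h]; ring
    · rw [max_eq_left (by linarith), min_eq_left (by linarith), max_eq_right h]; ring
  · simp [min_eq_left hc, max_eq_left (neg_nonpos.mpr hc)]
  · rw [Real.sign_of_pos hy, abs_of_pos hy]
    rcases le_total y c with h | h
    · rw [max_eq_right (by linarith), min_eq_left h, max_eq_left (by linarith)]; ring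
    · rw [max_eq_left (by linarith), min_eq_right h, max_eq_left (by linarith)]; ring

lemma sq_sub_clip_add_le {c : ℝ} (hc : 0 ≤ c) (θ w : ℝ) :
    (w - clip c (θ + w)) ^ 2 ≤ θ ^ 2 + max (|w| - c) 0 ^ 2 := by
  set M := max (|w| - c) 0
  have hM : 0 ≤ M := le_max_right _ _
  have hwM : |w| - c ≤ M := le_max_left _ _
  have hw₁ := neg_abs_le w
  have hw₂ := le_abs_self w
  unfold clip
  rcases le_total (θ + w) c with h1 | h1
  · rw [min_eq_left h1]
    rcases le_total (-c) (θ + w) with h2 | h2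
    · rw [max_eq_left h2]
      nlinarith
    · rw [max_eq_right h2]
      rcases le_total (-c) w with h3 | h3 <;> nlinarith
  · rw [min_eq_right h1, max_eq_left (by linarith)]
    rcases le_total c w with h3 | h3 <;> nlinarith

lemma integral_sq_sub_le_of_monotone (v : NNReal) {σ c : ℝ} (hσ : 0 ≤ σ) {f : ℝ → ℝ}
    (hf : Monotone f) (hfc : ∀ z, |f z| ≤ c) :
    ∫ z, (σ * z - f z) ^ 2 ∂gaussianReal 0 v ≤ σ ^ 2 * v + c ^ 2 := by
  have hmeas := hf.measurable
  have hsq := integrable_sq_gaussianReal 0 v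
  have hid : Integrable (fun z => z) (gaussianReal 0 v) :=
    (memLp_id_gaussianReal 1).integrable le_rfl
  have hzf : Integrable (fun z => z * f z) (gaussianReal 0 v) := by
    refine (hid.norm.mul_const c).mono' (by fun_prop) (ae_of_all _ fun z => ?_)
    simp only [norm_mul, Real.norm_eq_abs]
    exact mul_le_mul_of_nonneg_left (hfc z) (abs_nonneg z)
  have hf2 : Integrable (fun z => f z ^ 2) (gaussianReal 0 v) := by
    refine (integrable_const (c ^ 2)).mono' (by fun_prop) (ae_of_all _ fun z => ?_)
    simp only [norm_pow, Real.norm_eq_abs]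
    exact pow_le_pow_left₀ (abs_nonneg _) (hfc z) 2
  have hcross : 0 ≤ ∫ z, z * f z ∂gaussianReal 0 v :=
    integral_mul_nonneg_of_monotone (gaussianReal_zero_map_neg v) hf hzf
  have hf2_le : ∫ z, f z ^ 2 ∂gaussianReal 0 v ≤ c ^ 2 := by
    refine (integral_mono hf2 (integrable_const (c ^ 2)) fun z => ?_).trans_eq (by simp)
    simpa only [sq_abs] using pow_le_pow_left₀ (abs_nonneg _) (hfc z) 2
  have hexpand : ∫ z, (σ * z - f z) ^ 2 ∂gaussianReal 0 v
      = σ ^ 2 * ∫ z, z ^ 2 ∂gaussianReal 0 v - 2 * σ * ∫ z, z * f z ∂gaussianReal 0 v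
        + ∫ z, f z ^ 2 ∂gaussianReal 0 v := by
    have hpt : (fun z => (σ * z - f z) ^ 2)
        = fun z => σ ^ 2 * z ^ 2 - 2 * σ * (z * f z) + f z ^ 2 := by
      funext z
      ring
    rw [hpt, integral_add _ hf2, integral_sub (hsq.const_mul _) (hzf.const_mul _),
      integral_const_mul, integral_const_mul]
    exact (hsq.const_mul _).sub (hzf.const_mul _)
  rw [hexpand, integral_sq_gaussianReal]
  nlinarith [mul_nonneg hσ hcross]

lemma integral_sq_sub_clip_le {σ t : ℝ} (hσ : 0 ≤ σ) (ht : 0 ≤ t) (θ : ℝ) :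
    ∫ z, (σ * z - clip (σ * t) (θ + σ * z)) ^ 2 ∂gaussianReal 0 1
      ≤ θ ^ 2 + σ ^ 2 * exp (-t ^ 2 / 2) := by
  have hpt : ∀ z, (σ * z - clip (σ * t) (θ + σ * z)) ^ 2
      ≤ θ ^ 2 + σ ^ 2 * max (|z| - t) 0 ^ 2 := by
    intro z
    have h := sq_sub_clip_add_le (mul_nonneg hσ ht) θ (σ * z)
    have hscale : max (|σ * z| - σ * t) 0 = σ * max (|z| - t) 0 := by
      rw [mul_max_of_nonneg _ _ hσ, mul_zero, mul_sub, abs_mul, abs_of_nonneg hσ]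
    rwa [hscale, mul_pow] at h
  have htail : Integrable (fun z => max (|z| - t) 0 ^ 2) (gaussianReal 0 1) :=
    integrable_gaussianReal_of_abs_le_sq (by fun_prop) fun z => by
      simpa only [abs_sq, sq_abs] using sq_max_sub_le_sq ht |z|
  calc ∫ z, (σ * z - clip (σ * t) (θ + σ * z)) ^ 2 ∂gaussianReal 0 1
      ≤ ∫ z, (θ ^ 2 + σ ^ 2 * max (|z| - t) 0 ^ 2) ∂gaussianReal 0 1 :=
        integral_mono_of_nonneg (ae_of_all _ fun z => sq_nonneg _)
          ((integrable_const _).add (htail.const_mul _)) (ae_of_all _ hpt)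
    _ = θ ^ 2 + σ ^ 2 * ∫ z, max (|z| - t) 0 ^ 2 ∂gaussianReal 0 1 := by
        rw [integral_add (integrable_const _) (htail.const_mul _), integral_const_mul]
        simp
    _ ≤ θ ^ 2 + σ ^ 2 * exp (-t ^ 2 / 2) := by
        gcongr
        exact integral_sq_max_abs_sub_le ht

/-- Soft-thresholding risk bound: for `y = θ + σz`, `z ~ N(0,1)`,
`δ = sgn(y)(|y| - σt)₊` with `t = √(2 log B)`, `B > 1`,
`E(δ - θ)² ≤ min{2θ², σ²(1 + 2 log B)} + σ²/B`. -/
theorem stmt8 (σ B θ : ℝ) (hσ : 0 < σ) (hB : 1 < B) :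
    ∫ z : ℝ,
        (Real.sign (θ + σ * z) *
            max (|θ + σ * z| - σ * Real.sqrt (2 * Real.log B)) 0 - θ) ^ 2
        ∂(gaussianReal 0 1) ≤
      min (2 * θ ^ 2) (σ ^ 2 * (1 + 2 * Real.log B)) + σ ^ 2 / B := by
  set t := √(2 * log B)
  have ht : 0 ≤ t := sqrt_nonneg _
  have ht2 : t ^ 2 = 2 * log B := sq_sqrt (by linarith [log_pos hB])
  have hexp : exp (-t ^ 2 / 2) = B⁻¹ := by
    rw [ht2, show -(2 * log B) / 2 = -log B by ring, exp_neg, exp_log (by linarith)]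
  have hc : 0 ≤ σ * t := mul_nonneg hσ.le ht
  have hrisk : ∀ z, (sign (θ + σ * z) * max (|θ + σ * z| - σ * t) 0 - θ) ^ 2
      = (σ * z - clip (σ * t) (θ + σ * z)) ^ 2 := fun z => by
    rw [sign_mul_max_abs_sub_eq_sub_clip hc]
    ring
  have hbias := integral_sq_sub_clip_le hσ.le ht θ
  have hvar := integral_sq_sub_le_of_monotone 1 hσ.le
    (f := fun z => clip (σ * t) (θ + σ * z))
    ((clip_monotone _).comp ((monotone_id.const_mul hσ.le).const_add θ))
    fun z => abs_clip_le hc _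
  simp only [hrisk, ← min_add_add_right]
  refine le_min ?_ ?_
  · rw [hexp] at hbias
    rw [div_eq_mul_inv]
    linarith [sq_nonneg θ]
  · rw [NNReal.coe_one, mul_one, mul_pow, ht2] at hvar
    have : 0 ≤ σ ^ 2 / B := by positivity
    linarith
end
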